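/- Let v_p, v_r, v_s, u_p, u_q, u_r ∈ ℂ³ satisfy the flag conditions u_p·v_p = 0 and u_r·v_r = 0. Then (u_p·v_r) · ((v_s×v_p)·(u_q×u_r)) = (u_q·v_r)(u_p·v_s)(u_r·v_p) + det(v_p, v_r, v_s) · det(u_p, u_q, u_r). (This is the paper's 3-term skein relation J_r^p J_{sp}^{qr} = J_r^q J_s^p J_p^r + J_{prs} J^{pqr}.) -/

import Mathlib

/-!
Both sides are polynomials in the pairings `u_j ⬝ᵥ v_i`: the Binet–Cauchy identity expands the
left side, and `det (of v) * det (of u) = det (of v * (of u)ᵀ)` turns the product of determinants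
into the determinant of the `3 × 3` matrix of pairings. The flag conditions make two of its
entries vanish, and expanding it leaves exactly the left side minus the first term on the right.
-/

open Matrix

theorem Matrix.det_of_mul_det_of_eq_det_dotProduct {n R : Type*} [Fintype n] [DecidableEq n]
    [CommRing R] (v u : n → n → R) :
    det (of v) * det (of u) = det (of fun i j => u j ⬝ᵥ v i) := by
  rw [← det_transpose (of u), ← det_mul]
  congr 1
  ext i j
  simp [mul_apply, dotProduct, mul_comm]

/-- 3-term skein relation `J_r^p J_{sp}^{qr} = J_r^q J_s^p J_p^r + J_{prs} J^{pqr}`. -/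
theorem skein_J_rp_Jsp_qr (vp vr vs up uq ur : Fin 3 → ℂ)
    (hp : up ⬝ᵥ vp = 0) (hr : ur ⬝ᵥ vr = 0) :
    (up ⬝ᵥ vr) * ((crossProduct vs vp) ⬝ᵥ (crossProduct uq ur)) =
      (uq ⬝ᵥ vr) * (up ⬝ᵥ vs) * (ur ⬝ᵥ vp) +
        Matrix.det (Matrix.of ![vp, vr, vs]) * Matrix.det (Matrix.of ![up, uq, ur]) := by
  rw [cross_dot_cross, det_of_mul_det_of_eq_det_dotProduct, det_fin_three]
  simp only [of_apply, cons_val_zero, cons_val_one, cons_val_two, head_cons, tail_cons,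
    hp, hr, dotProduct_comm vs, dotProduct_comm vp]
  ring
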